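/- There is an absolute constant C > 0 such that the following holds. Let ε ∈ (0,1/2], let P ⊂ ℝ^d be a finite set partitioned into clusters C_1,…,C_k with centers a_1,…,a_k (write A = {a_1,…,a_k} and Δ_q := cost(C_j,a_j)/|C_j| for q ∈ C_j). Let Ω ⊆ P have non-negative weights (w_q)_{q∈Ω} satisfying: (i) for each q ∈ Ω ∩ C_j, w_q·cost(q,a_j) ≤ 4·cost(P,A)/m and w_q·Δ_q ≤ 4·cost(P,A)/m; (ii) property P1: ∑_{q∈Ω∩C_j} w_q ∈ [(1−ε)|C_j|, (1+ε)|C_j|] for each j; and (iii) property P3: ∑_{q∈Ω∩C_j} w_q·cost(q,a_j) ∈ [(1−ε)cost(C_j,a_j), (1+ε)cost(C_j,a_j)] for each j. Then for every finite set S of centers in ℝ^d, defining err(q,S) := √(cost(q,S)·cost(q,A)) + √(cost(q,S)·Δ_q) + cost(q,A) + Δ_q, one has ∑_{q∈Ω} w_q²·err(q,S)² ≤ C·(cost(P,A)/m)·(cost(P,S) + cost(P,A)). -/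

import Mathlib

/-!
Pointwise, `(x₁ + x₂ + x₃ + x₄)² ≤ 4 ∑ xᵢ²` and the weight bounds (i) give
`w_q² err(q,S)² ≤ 16 (cost(P,A)/m) · w_q (2 cost(q,S) + cost(q,A) + Δ_q)`.
After summing over `Ω`, (P3) bounds `∑ w_q cost(q,A)` and (P1) bounds `∑ w_q Δ_q` by
`(1 + ε) cost(P,A)`. For `∑ w_q cost(q,S)` use `cost(x,S) ≤ 2 cost(y,S) + 2‖x - y‖²` twice:
from `q` to its center `a_j`, whose weighted multiplicity is at most `(1 + ε)|C_j|` by (P1),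
and from `a_j` back to the points of `C_j`.
-/

open Finset

noncomputable section

/-- `ℝ^d` as a Euclidean space. -/
abbrev Pt (d : ℕ) := EuclideanSpace ℝ (Fin d)

/-- `cost(p,S) = min_{s ∈ S} ‖p - s‖²`. -/
noncomputable def pcost {d : ℕ} (p : Pt d) (S : Finset (Pt d)) : ℝ :=
  sInf ((fun s => ‖p - s‖ ^ 2) '' (S : Set (Pt d)))

/-- `cost(P,S) = ∑_{p ∈ P} min_{s ∈ S} ‖p - s‖²`. -/
noncomputable def scost {d : ℕ} (P S : Finset (Pt d)) : ℝ :=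
  ∑ p ∈ P, pcost p S

section Fiberwise

variable {α ι : Type*} [Fintype ι] [DecidableEq ι]

theorem sum_fiberwise_apply {M : Type*} [AddCommMonoid M] (s : Finset α) (g : α → ι)
    (f : α → ι → M) : ∑ j, ∑ i ∈ s with g i = j, f i j = ∑ i ∈ s, f i (g i) := by
  rw [← sum_fiberwise s g]
  refine sum_congr rfl fun j _ ↦ sum_congr rfl fun i hi ↦ ?_
  rw [(mem_filter.1 hi).2]

theorem sum_comp_le_of_fiber_sum_le {Ω : Finset α} {cl : α → ι} {f : α → ι → ℝ}
    {b : ι → ℝ} (h : ∀ j, ∑ q ∈ Ω with cl q = j, f q j ≤ b j) :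
    ∑ q ∈ Ω, f q (cl q) ≤ ∑ j, b j := by
  rw [← sum_fiberwise_apply]
  exact sum_le_sum fun j _ ↦ h j

theorem sum_mul_comp_le_of_fiber_mass_le {P Ω : Finset α} {cl : α → ι} {w : α → ℝ}
    {g : ι → ℝ} {c : ℝ} (hg : ∀ j, 0 ≤ g j)
    (hmass : ∀ j, ∑ q ∈ Ω with cl q = j, w q ≤ c * #{p ∈ P | cl p = j}) :
    ∑ q ∈ Ω, w q * g (cl q) ≤ c * ∑ p ∈ P, g (cl p) := by
  calc ∑ q ∈ Ω, w q * g (cl q) = ∑ j, (∑ q ∈ Ω with cl q = j, w q) * g j := by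
        simp only [sum_mul, sum_fiberwise_apply Ω cl fun q j ↦ w q * g j]
    _ ≤ ∑ j, c * #{p ∈ P | cl p = j} * g j :=
        sum_le_sum fun j _ ↦ mul_le_mul_of_nonneg_right (hmass j) (hg j)
    _ = c * ∑ p ∈ P, g (cl p) := by
        simp only [← sum_fiberwise' P cl g, mul_sum, sum_const, nsmul_eq_mul, mul_assoc]

theorem sum_mul_fiber_average_le {P Ω : Finset α} {cl : α → ι} {w : α → ℝ}
    {f : α → ι → ℝ} {c : ℝ} (hf : ∀ p j, 0 ≤ f p j)
    (hmass : ∀ j, ∑ q ∈ Ω with cl q = j, w q ≤ c * #{p ∈ P | cl p = j}) :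
    ∑ q ∈ Ω, w q * ((∑ p ∈ P with cl p = cl q, f p (cl q)) / #{p ∈ P | cl p = cl q})
      ≤ c * ∑ j, ∑ p ∈ P with cl p = j, f p j := by
  set g : ι → ℝ := fun j ↦ (∑ p ∈ P with cl p = j, f p j) / #{p ∈ P | cl p = j}
  refine (sum_mul_comp_le_of_fiber_mass_le (g := g)
    (fun j ↦ div_nonneg (sum_nonneg fun p _ ↦ hf p j) (Nat.cast_nonneg _)) hmass).trans_eq ?_
  rw [← sum_fiberwise' P cl g]
  simp only [g, sum_const, nsmul_eq_mul, ← expect_eq_sum_div_card, card_mul_expect]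

end Fiberwise

section Cost

variable {d : ℕ}

theorem pcost_nonneg (p : Pt d) (S : Finset (Pt d)) : 0 ≤ pcost p S :=
  Real.sInf_nonneg <| by
    rintro x ⟨s, -, rfl⟩
    positivity

theorem pcost_le_of_mem {p s : Pt d} {S : Finset (Pt d)} (hs : s ∈ S) :
    pcost p S ≤ ‖p - s‖ ^ 2 :=
  csInf_le (S.finite_toSet.image _).bddBelow ⟨s, hs, rfl⟩

theorem exists_mem_pcost_eq (p : Pt d) {S : Finset (Pt d)} (hS : S.Nonempty) :
    ∃ s ∈ S, pcost p S = ‖p - s‖ ^ 2 := by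
  obtain ⟨s, hs, h⟩ := ((coe_nonempty.2 hS).image fun s ↦ ‖p - s‖ ^ 2).csInf_mem
    (S.finite_toSet.image _)
  exact ⟨s, hs, h.symm⟩

theorem pcost_le_two_mul_pcost_add (x y : Pt d) (S : Finset (Pt d)) :
    pcost x S ≤ 2 * pcost y S + 2 * ‖x - y‖ ^ 2 := by
  rcases S.eq_empty_or_nonempty with rfl | hS
  · simp only [pcost, coe_empty, Set.image_empty, Real.sInf_empty]
    positivity
  obtain ⟨s, hs, hys⟩ := exists_mem_pcost_eq y hS
  calc pcost x S ≤ ‖(x - y) + (y - s)‖ ^ 2 := by simpa using pcost_le_of_mem (p := x) hs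
    _ ≤ (‖x - y‖ + ‖y - s‖) ^ 2 := by gcongr; exact norm_add_le _ _
    _ ≤ 2 * (‖x - y‖ ^ 2 + ‖y - s‖ ^ 2) := add_sq_le
    _ = 2 * pcost y S + 2 * ‖x - y‖ ^ 2 := by rw [hys]; ring

theorem sum_mul_pcost_le {ι : Type*} [Fintype ι] [DecidableEq ι] {P Ω : Finset (Pt d)}
    {cl : Pt d → ι} {a : ι → Pt d} {w : Pt d → ℝ} {c : ℝ} (hw : ∀ q ∈ Ω, 0 ≤ w q)
    (hc : 0 ≤ c) (hmass : ∀ j, ∑ q ∈ Ω with cl q = j, w q ≤ c * #{p ∈ P | cl p = j})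
    (S : Finset (Pt d)) :
    ∑ q ∈ Ω, w q * pcost q S ≤ 2 * c * (2 * scost P S + 2 * ∑ p ∈ P, ‖p - a (cl p)‖ ^ 2)
      + 2 * ∑ q ∈ Ω, w q * ‖q - a (cl q)‖ ^ 2 := by
  have hcenters : ∑ q ∈ Ω, w q * pcost (a (cl q)) S ≤ c * ∑ p ∈ P, pcost (a (cl p)) S :=
    sum_mul_comp_le_of_fiber_mass_le (g := fun j ↦ pcost (a j) S)
      (fun j ↦ pcost_nonneg _ _) hmass
  have hP : ∑ p ∈ P, pcost (a (cl p)) S ≤ 2 * scost P S + 2 * ∑ p ∈ P, ‖p - a (cl p)‖ ^ 2 := by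
    simp only [scost, mul_sum, ← sum_add_distrib]
    exact sum_le_sum fun p _ ↦ norm_sub_rev p (a (cl p)) ▸ pcost_le_two_mul_pcost_add _ _ S
  calc ∑ q ∈ Ω, w q * pcost q S
      ≤ ∑ q ∈ Ω, (2 * (w q * pcost (a (cl q)) S) + 2 * (w q * ‖q - a (cl q)‖ ^ 2)) :=
        sum_le_sum fun q hq ↦ by
          nlinarith [hw q hq, pcost_le_two_mul_pcost_add q (a (cl q)) S]
    _ ≤ _ := by
        rw [sum_add_distrib, ← mul_sum, ← mul_sum, mul_assoc]
        gcongr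
        exact hcenters.trans (mul_le_mul_of_nonneg_left hP hc)

end Cost

theorem sq_mul_sq_add_sqrt_le {w p c δ T : ℝ} (hw : 0 ≤ w) (hp : 0 ≤ p) (hc : 0 ≤ c)
    (hδ : 0 ≤ δ) (hwc : w * c ≤ T) (hwδ : w * δ ≤ T) :
    w ^ 2 * (√(p * c) + √(p * δ) + c + δ) ^ 2 ≤ 4 * T * (2 * (w * p) + w * c + w * δ) := by
  have hsum : (√(p * c) + √(p * δ) + c + δ) ^ 2 ≤ 4 * (p * c + p * δ + c ^ 2 + δ ^ 2) := by
    have := sq_sum_le_card_mul_sum_sq (s := univ) (f := ![√(p * c), √(p * δ), c, δ])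
    simpa [Fin.sum_univ_four, Real.sq_sqrt (mul_nonneg hp hc), Real.sq_sqrt (mul_nonneg hp hδ),
      add_assoc] using this
  have hwp : 0 ≤ w * p := mul_nonneg hw hp
  calc w ^ 2 * (√(p * c) + √(p * δ) + c + δ) ^ 2
      ≤ w ^ 2 * (4 * (p * c + p * δ + c ^ 2 + δ ^ 2)) :=
        mul_le_mul_of_nonneg_left hsum (sq_nonneg w)
    _ = 4 * ((w * p) * (w * c) + (w * p) * (w * δ) + (w * c) ^ 2 + (w * δ) ^ 2) := by ring
    _ ≤ 4 * ((w * p) * T + (w * p) * T + T * (w * c) + T * (w * δ)) := by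
        gcongr 4 * (?_ + ?_ + ?_ + ?_)
        · exact mul_le_mul_of_nonneg_left hwc hwp
        · exact mul_le_mul_of_nonneg_left hwδ hwp
        · rw [sq]; exact mul_le_mul_of_nonneg_right hwc (mul_nonneg hw hc)
        · rw [sq]; exact mul_le_mul_of_nonneg_right hwδ (mul_nonneg hw hδ)
    _ = 4 * T * (2 * (w * p) + w * c + w * δ) := by ring

/-- The key variance bound: under the sensitivity weight bounds and the size/cost
preservation properties (P1), (P3),
`∑_{q∈Ω} w_q²·err(q,S)² ≤ C·(cost(P,A)/m)·(cost(P,S) + cost(P,A))`. -/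
theorem err_variance_bound :
    ∃ C : ℝ, 0 < C ∧
      ∀ (d k m : ℕ) (ε : ℝ) (P : Finset (Pt d)) (cl : Pt d → Fin k)
        (a : Fin k → Pt d) (Ω : Finset (Pt d)) (w : Pt d → ℝ),
        0 < ε → ε ≤ 1 / 2 → Ω ⊆ P → (∀ q ∈ Ω, 0 ≤ w q) →
        -- notation
        (let Cj : Fin k → Finset (Pt d) := fun j => P.filter fun p => cl p = j
         let costC : Fin k → ℝ := fun j => ∑ p ∈ Cj j, ‖p - a j‖ ^ 2
         let costPA : ℝ := ∑ j : Fin k, costC j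
         let Δ : Pt d → ℝ := fun q => costC (cl q) / ((Cj (cl q)).card : ℝ)
         -- (i) the sensitivity-sampling weight bounds
         (∀ q ∈ Ω, w q * ‖q - a (cl q)‖ ^ 2 ≤ 4 * costPA / (m : ℝ) ∧
            w q * Δ q ≤ 4 * costPA / (m : ℝ)) →
         -- (ii) property (P1): cluster size preservation
         (∀ j : Fin k,
            (1 - ε) * (((Cj j).card : ℝ)) ≤ ∑ q ∈ Ω.filter (fun q => cl q = j), w q ∧
            ∑ q ∈ Ω.filter (fun q => cl q = j), w q ≤ (1 + ε) * (((Cj j).card : ℝ))) →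
         -- (iii) property (P3): cluster cost preservation
         (∀ j : Fin k,
            (1 - ε) * costC j ≤ ∑ q ∈ Ω.filter (fun q => cl q = j), w q * ‖q - a j‖ ^ 2 ∧
            ∑ q ∈ Ω.filter (fun q => cl q = j), w q * ‖q - a j‖ ^ 2 ≤ (1 + ε) * costC j) →
         ∀ S : Finset (Pt d),
           (∑ q ∈ Ω, (w q) ^ 2 *
              (Real.sqrt (pcost q S * ‖q - a (cl q)‖ ^ 2)
                + Real.sqrt (pcost q S * Δ q)
                + ‖q - a (cl q)‖ ^ 2 + Δ q) ^ 2)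
             ≤ C * (costPA / (m : ℝ)) * (scost P S + costPA)) := by
  refine ⟨336, by norm_num, ?_⟩
  intro d k m ε P cl a Ω w _ hε _ hw Cj costC costPA Δ hsens hP1 hP3 S
  have hc : 1 + ε ≤ 3 / 2 := by linarith
  have hA : 0 ≤ costPA := sum_nonneg fun j _ ↦ sum_nonneg fun p _ ↦ sq_nonneg _
  have hs : 0 ≤ scost P S := sum_nonneg fun p _ ↦ pcost_nonneg p S
  have hcostPA : costPA = ∑ p ∈ P, ‖p - a (cl p)‖ ^ 2 :=
    sum_fiberwise_apply P cl fun p j ↦ ‖p - a j‖ ^ 2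
  have hmass (j : Fin k) : ∑ q ∈ Ω with cl q = j, w q ≤ (1 + ε) * #(Cj j) := (hP1 j).2
  have hcost : ∑ q ∈ Ω, w q * ‖q - a (cl q)‖ ^ 2 ≤ (1 + ε) * costPA := by
    rw [mul_sum]
    exact sum_comp_le_of_fiber_sum_le fun j ↦ (hP3 j).2
  have hΔ : ∑ q ∈ Ω, w q * Δ q ≤ (1 + ε) * costPA :=
    sum_mul_fiber_average_le (f := fun p j ↦ ‖p - a j‖ ^ 2) (fun _ _ ↦ sq_nonneg _) hmass
  have hpcost := sum_mul_pcost_le (a := a) hw (by linarith) hmass S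
  rw [← hcostPA] at hpcost
  calc _ ≤ ∑ q ∈ Ω, 4 * (4 * costPA / m) *
        (2 * (w q * pcost q S) + w q * ‖q - a (cl q)‖ ^ 2 + w q * Δ q) :=
        sum_le_sum fun q hq ↦ sq_mul_sq_add_sqrt_le (hw q hq) (pcost_nonneg q S) (sq_nonneg _)
          (by positivity) (hsens q hq).1 (hsens q hq).2
    _ = 4 * (4 * costPA / m) * (2 * ∑ q ∈ Ω, w q * pcost q S
          + ∑ q ∈ Ω, w q * ‖q - a (cl q)‖ ^ 2 + ∑ q ∈ Ω, w q * Δ q) := by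
        simp only [← mul_sum, sum_add_distrib]
    _ ≤ 4 * (4 * costPA / m) * (21 * (scost P S + costPA)) := by
        refine mul_le_mul_of_nonneg_left ?_
          (mul_nonneg zero_le_four (div_nonneg (by linarith) m.cast_nonneg))
        nlinarith [mul_le_mul_of_nonneg_right hc hs, mul_le_mul_of_nonneg_right hc hA]
    _ = 336 * (costPA / m) * (scost P S + costPA) := by ring
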